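/- Let μ ⊆ λ be Young diagrams and let T = (T⁽¹⁾,…,T⁽ᵏ⁾) ∈ X_μ^λ be such that every component is a singleton, i.e. |T⁽ⁱ⁾| = 1 for all i, say T⁽ⁱ⁾ = {dᵢ}. For each i with 2 ≤ i ≤ k, the cell dᵢ is mergeable if and only if dᵢ₋₁ < dᵢ in the total order. Consequently, T has no mergeable cell if and only if d₁ > d₂ > ⋯ > d_k. -/

import Mathlib

/-- The cells of the skew shape `λ/μ`. -/
def skewCells (μ lam : YoungDiagram) : Finset (ℕ × ℕ) := lam.cells \ μ.cells

/-- The total order on cells induced by a filling `f`: a cell `c = (i,j)` is smaller than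
`c' = (i',j')` if `f c < f c'`, or `f c = f c'` and `j < j'`, or
`f c = f c'`, `j = j'` and `i > i'`. -/
def cellLT (f : ℕ × ℕ → ℕ) (c c' : ℕ × ℕ) : Prop :=
  f c < f c' ∨ (f c = f c' ∧ (c.2 < c'.2 ∨ (c.2 = c'.2 ∧ c'.1 < c.1)))

/-- `f` is a semistandard filling on the cell set `s`: entries are positive,
weakly increasing along rows (left to right) and strictly increasing down columns. -/
def IsSSYTOn (f : ℕ × ℕ → ℕ) (s : Finset (ℕ × ℕ)) : Prop :=
  (∀ c ∈ s, 0 < f c) ∧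
  (∀ i j j', j ≤ j' → (i, j) ∈ s → (i, j') ∈ s → f (i, j) ≤ f (i, j')) ∧
  (∀ i i' j, i < i' → (i, j) ∈ s → (i', j) ∈ s → f (i, j) < f (i', j))

/-- An element of `X_μ^λ`: a chain `μ = λ₀ ⊊ λ₁ ⊊ ⋯ ⊊ λ_k = λ` of Young diagrams together
with a filling of `λ/μ` whose restriction to each piece `λᵢ₊₁/λᵢ` is a semistandard Young
tableau.  (The tuple `(T⁽¹⁾, …, T⁽ᵏ⁾)` is recorded as the single concatenated filling
`entry`, normalized to be `0` outside `λ/μ`; the chain is recorded as a function on `ℕ`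
constantly equal to `λ` from index `k` on.) -/
structure XTuple (μ lam : YoungDiagram) where
  k : ℕ
  chain : ℕ → YoungDiagram
  chain_zero : chain 0 = μ
  chain_last : ∀ i, k ≤ i → chain i = lam
  chain_strict : ∀ i < k, (chain i).cells ⊂ (chain (i + 1)).cells
  entry : ℕ × ℕ → ℕ
  entry_eq_zero : ∀ c ∉ skewCells μ lam, entry c = 0
  piece_ssyt : ∀ i < k, IsSSYTOn entry ((chain (i + 1)).cells \ (chain i).cells)

/-- The cells of the `i`-th piece `T⁽ⁱ⁺¹⁾` (0-indexed: piece `i` has shape `λᵢ₊₁/λᵢ`). -/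
def pieceCells {μ lam : YoungDiagram} (T : XTuple μ lam) (i : ℕ) : Finset (ℕ × ℕ) :=
  (T.chain (i + 1)).cells \ (T.chain i).cells

/-- The length `ℓ(T) = k` of an element of `X_μ^λ`. -/
def XTuple.len {μ lam : YoungDiagram} (T : XTuple μ lam) : ℕ := T.k

/-- The cell `c`, lying in piece `i`, is splittable: its piece has more than one cell and
`c` is the largest cell of its piece. -/
def SplittableAt {μ lam : YoungDiagram} (T : XTuple μ lam) (c : ℕ × ℕ) (i : ℕ) : Prop :=
  i < T.k ∧ c ∈ pieceCells T i ∧ 1 < (pieceCells T i).card ∧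
    ∀ c' ∈ pieceCells T i, c' ≠ c → cellLT T.entry c' c

/-- The cell `c` is splittable in `T`. -/
def SplittableCell {μ lam : YoungDiagram} (T : XTuple μ lam) (c : ℕ × ℕ) : Prop :=
  ∃ i, SplittableAt T c i

/-- The cell `c`, lying in piece `i`, is mergeable: it is not in the first piece, its piece
is a single cell, the union of its piece with the previous piece is semistandard, and `c`
is larger than every cell of the previous piece. -/
def MergeableAt {μ lam : YoungDiagram} (T : XTuple μ lam) (c : ℕ × ℕ) (i : ℕ) : Prop :=
  1 ≤ i ∧ i < T.k ∧ c ∈ pieceCells T i ∧ (pieceCells T i).card = 1 ∧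
    IsSSYTOn T.entry (pieceCells T (i - 1) ∪ pieceCells T i) ∧
    ∀ c' ∈ pieceCells T (i - 1), cellLT T.entry c' c

/-- The cell `c` is mergeable in `T`. -/
def MergeableCell {μ lam : YoungDiagram} (T : XTuple μ lam) (c : ℕ × ℕ) : Prop :=
  ∃ i, MergeableAt T c i

/-- `cell(T)`: the largest cell of `T` (in the total order `cellLT T.entry`) among the
splittable or mergeable cells, or `none` (i.e. `∅`) if there is no such cell. -/
noncomputable def cellOf {μ lam : YoungDiagram} (T : XTuple μ lam) : Option (ℕ × ℕ) := by
  classical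
  exact if h : ∃ c, (SplittableCell T c ∨ MergeableCell T c) ∧
      ∀ c', (SplittableCell T c' ∨ MergeableCell T c') → c' ≠ c → cellLT T.entry c' c
    then some h.choose else none

/-- `T` is splittable if `cell(T)` is a splittable cell. -/
def XTuple.Splittable {μ lam : YoungDiagram} (T : XTuple μ lam) : Prop :=
  ∃ c, cellOf T = some c ∧ SplittableCell T c

/-- `T` is mergeable if `cell(T)` is a mergeable cell. -/
def XTuple.Mergeable {μ lam : YoungDiagram} (T : XTuple μ lam) : Prop :=
  ∃ c, cellOf T = some c ∧ MergeableCell T c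

/-- The graph of the map `Φ`:  if `cell(T)` is splittable and lies in piece `i`, the piece
is replaced by the pair `(T⁽ⁱ⁾ ∖ {cell(T)}, {cell(T)})`, i.e. the Young diagram
`λᵢ₊₁ ∖ {cell(T)}` is inserted into the chain; if `cell(T)` is mergeable and lies in piece
`i`, the pieces `i-1` and `i` are merged, i.e. `λᵢ` is deleted from the chain; if
`cell(T) = ∅` then `T` is fixed.  The filling is unchanged in all cases. -/
def PhiRel {μ lam : YoungDiagram} (T T' : XTuple μ lam) : Prop :=
  (∃ c i, cellOf T = some c ∧ SplittableAt T c i ∧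
      T'.k = T.k + 1 ∧ T'.entry = T.entry ∧
      (∀ j, j ≤ i → T'.chain j = T.chain j) ∧
      (T'.chain (i + 1)).cells = (T.chain (i + 1)).cells.erase c ∧
      (∀ j, i + 2 ≤ j → T'.chain j = T.chain (j - 1))) ∨
  (∃ c i, cellOf T = some c ∧ MergeableAt T c i ∧
      T'.k + 1 = T.k ∧ T'.entry = T.entry ∧
      (∀ j, j < i → T'.chain j = T.chain j) ∧
      (∀ j, i ≤ j → T'.chain j = T.chain (j + 1))) ∨
  (cellOf T = none ∧ T' = T)

/-- The map `Φ : X_μ^λ → X_μ^λ`. -/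
noncomputable def Phi {μ lam : YoungDiagram} (T : XTuple μ lam) : XTuple μ lam := by
  classical
  exact if h : ∃ T', PhiRel T T' then h.choose else T

/-! A singleton piece `{c}` can be merged into the previous piece as soon as `c` exceeds the
cells of that piece: `c` lies outside the Young diagram containing the previous piece, so it is
never weakly up-left of one of its cells, and the row and column conditions involving `c` then
follow from the order `cellLT`. As distinct pieces are disjoint, mergeability of `dᵢ` is exactly
`dᵢ₋₁ < dᵢ`, and the second claim follows because `cellLT` is a strict total order. -/

theorem cellLT_asymm {f : ℕ × ℕ → ℕ} {a b : ℕ × ℕ} (h : cellLT f a b) :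
    ¬ cellLT f b a := by
  unfold cellLT at *
  omega

theorem cellLT_of_not_cellLT {f : ℕ × ℕ → ℕ} {a b : ℕ × ℕ} (hne : a ≠ b)
    (h : ¬ cellLT f a b) : cellLT f b a := by
  unfold cellLT at *
  rw [Ne, Prod.ext_iff] at hne
  omega

theorem IsSSYTOn.insert {f : ℕ × ℕ → ℕ} {s : Finset (ℕ × ℕ)} {ν : YoungDiagram}
    {c : ℕ × ℕ}
    (hs : IsSSYTOn f s) (hsν : s ⊆ ν.cells) (hc : c ∉ ν) (hfc : 0 < f c)
    (hlt : ∀ x ∈ s, cellLT f x c) : IsSSYTOn f (insert c s) := by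
  obtain ⟨hpos, hrow, hcol⟩ := hs
  have not_le : ∀ x ∈ s, ¬ c ≤ x := fun x hx hcx => hc (ν.isLowerSet hcx (hsν hx))
  refine ⟨?_, ?_, ?_⟩
  · exact (Finset.forall_mem_insert _ _ _).mpr ⟨hfc, hpos⟩
  · intro r j j' hjj hx hy
    rw [Finset.mem_insert] at hx hy
    rcases hx with hx | hx <;> rcases hy with hy | hy
    · rw [hx, hy]
    · exact absurd (Prod.mk_le_mk.mpr ⟨le_rfl, hjj⟩) (hx ▸ not_le _ hy)
    · have := hlt _ hx
      unfold cellLT at this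
      rw [← hy] at this
      omega
    · exact hrow r j j' hjj hx hy
  · intro r r' j hrr hx hy
    rw [Finset.mem_insert] at hx hy
    rcases hx with hx | hx <;> rcases hy with hy | hy
    · rw [← hx] at hy
      simp only [Prod.mk.injEq] at hy
      omega
    · exact absurd (Prod.mk_le_mk.mpr ⟨hrr.le, le_rfl⟩) (hx ▸ not_le _ hy)
    · have := hlt _ hx
      unfold cellLT at this
      rw [← hy] at this
      omega
    · exact hcol r r' j hrr hx hy

namespace XTuple

variable {μ lam : YoungDiagram} (T : XTuple μ lam)

theorem chain_monotone : Monotone T.chain := by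
  refine monotone_nat_of_le_succ fun n => ?_
  rcases lt_or_ge n T.k with hn | hn
  · exact (T.chain_strict n hn).le
  · rw [T.chain_last n hn, T.chain_last (n + 1) (by omega)]

variable {T}

theorem eq_of_mem_pieceCells {c : ℕ × ℕ} {i j : ℕ} (hi : c ∈ pieceCells T i)
    (hj : c ∈ pieceCells T j) : i = j := by
  unfold pieceCells at hi hj
  rw [Finset.mem_sdiff] at hi hj
  by_contra hne
  rcases lt_or_gt_of_ne hne with h | h
  · exact hj.2 (T.chain_monotone (Nat.succ_le_of_lt h) hi.1)
  · exact hi.2 (T.chain_monotone (Nat.succ_le_of_lt h) hj.1)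

theorem mergeableCell_iff_mergeableAt {c : ℕ × ℕ} {i : ℕ} (hc : c ∈ pieceCells T i) :
    MergeableCell T c ↔ MergeableAt T c i :=
  ⟨fun ⟨_, hj⟩ => eq_of_mem_pieceCells hj.2.2.1 hc ▸ hj, fun h => ⟨i, h⟩⟩

theorem mergeableAt_iff_forall_cellLT {c : ℕ × ℕ} {i : ℕ} (hi : 1 ≤ i) (hik : i < T.k)
    (hc : pieceCells T i = {c}) :
    MergeableAt T c i ↔ ∀ c' ∈ pieceCells T (i - 1), cellLT T.entry c' c := by
  have hprev : i - 1 + 1 = i := Nat.sub_add_cancel hi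
  have hcmem : c ∈ pieceCells T i := hc ▸ Finset.mem_singleton_self c
  refine ⟨fun h => h.2.2.2.2.2, fun hlt => ⟨hi, hik, hcmem, by simp [hc], ?_, hlt⟩⟩
  rw [hc, Finset.union_singleton]
  exact (T.piece_ssyt (i - 1) (by omega)).insert (hprev ▸ Finset.sdiff_subset)
    (Finset.mem_sdiff.mp hcmem).2 ((T.piece_ssyt i hik).1 c hcmem) hlt

end XTuple

open XTuple in
theorem mergeable_iff_of_singletons_general (μ lam : YoungDiagram)
    (T : XTuple μ lam) (d : ℕ → ℕ × ℕ)
    (hd : ∀ i < T.k, pieceCells T i = {d i}) :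
    (∀ i, 1 ≤ i → i < T.k →
      (MergeableCell T (d i) ↔ cellLT T.entry (d (i - 1)) (d i))) ∧
    ((∀ c, ¬ MergeableCell T c) ↔
      ∀ i, i + 1 < T.k → cellLT T.entry (d (i + 1)) (d i)) := by
  have mem : ∀ i < T.k, d i ∈ pieceCells T i := fun i hi => by simp [hd i hi]
  have mergeable_iff : ∀ i, 1 ≤ i → i < T.k →
      (MergeableCell T (d i) ↔ cellLT T.entry (d (i - 1)) (d i)) := fun i hi hik => by
    rw [mergeableCell_iff_mergeableAt (mem i hik),
      mergeableAt_iff_forall_cellLT hi hik (hd i hik), hd (i - 1) (by omega)]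
    simp only [Finset.mem_singleton, forall_eq]
  refine ⟨mergeable_iff, fun hnone i hi => ?_, fun hdec c ⟨j, hj1, hjk, hcj, hjrest⟩ => ?_⟩
  · have hne : d i ≠ d (i + 1) := fun h =>
      absurd (eq_of_mem_pieceCells (mem i (by omega)) (h ▸ mem (i + 1) hi)) (by omega)
    refine cellLT_of_not_cellLT hne fun hlt => hnone (d (i + 1)) ?_
    exact (mergeable_iff (i + 1) (by omega) hi).mpr hlt
  · obtain rfl : c = d j := by simpa [hd j hjk] using hcj
    have hdesc := hdec (j - 1) (by omega)
    rw [Nat.sub_add_cancel hj1] at hdesc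
    exact cellLT_asymm hdesc ((mergeable_iff j hj1 hjk).mp ⟨j, hj1, hjk, hcj, hjrest⟩)

/-- Let `T = (T⁽¹⁾, …, T⁽ᵏ⁾) ∈ X_μ^λ` have all components singletons, say `T⁽ⁱ⁾ = {dᵢ}`
(here 0-indexed: piece `i` is `T⁽ⁱ⁺¹⁾`, so `d i` is the paper's `d_{i+1}`).  Then for each
`i` with `2 ≤ i+1 ≤ k` (i.e. `1 ≤ i < k`), the cell `d i` is mergeable iff
`d (i-1) < d i` in the total order; consequently `T` has no mergeable cell iff
`d 0 > d 1 > ⋯ > d (k-1)`. -/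
theorem mergeable_iff_of_singletons (μ lam : YoungDiagram) (hsub : μ ≤ lam)
    (T : XTuple μ lam) (d : ℕ → ℕ × ℕ)
    (hd : ∀ i < T.k, pieceCells T i = {d i}) :
    (∀ i, 1 ≤ i → i < T.k →
      (MergeableCell T (d i) ↔ cellLT T.entry (d (i - 1)) (d i))) ∧
    ((∀ c, ¬ MergeableCell T c) ↔
      ∀ i, i + 1 < T.k → cellLT T.entry (d (i + 1)) (d i)) :=
  mergeable_iff_of_singletons_general μ lam T d hd
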